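/- arXiv:1509.06464 — 8 statements merged into one kernel-verified Lean document; each statement's English description precedes it below -/
import Mathlib

section
/- Let V be a finite vertex set, let F be a simple graph on V that is a forest (i.e., F is acyclic), and let H be a simple graph on V. Let f be the number of connected components of F, and suppose that at least k connected components C of F are left by an edge of H, i.e., there is an edge of H having exactly one endpoint in C. Then the number of connected components of the union graph F ⊔ H is at most f − k/2 (so if k ≥ c·f then F ⊔ H has at most (1 − c/2)·f connected components). -/
open Finset

lemma aux {α β : Type*} [Fintype α] [Fintype β] [DecidableEq β] (φ : α → β)
    (hsurj : Function.Surjective φ) (S : Finset α)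
    (hS : ∀ s ∈ S, ∃ t, t ≠ s ∧ φ t = φ s) :
    2 * Fintype.card β + S.card ≤ 2 * Fintype.card α := by
  classical
  have hα : Fintype.card α = ∑ b : β, (univ.filter (fun a => φ a = b)).card := by
    rw [← Finset.card_univ, Finset.card_eq_sum_card_fiberwise (fun a _ => mem_univ (φ a))]
  have hSc : S.card = ∑ b : β, (S.filter (fun a => φ a = b)).card := by
    rw [Finset.card_eq_sum_card_fiberwise (fun a _ => mem_univ (φ a))]
  rw [hα, hSc, Finset.mul_sum]
  have hβ : 2 * Fintype.card β = ∑ _b : β, 2 := by simp [mul_comm]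
  rw [hβ, ← Finset.sum_add_distrib]
  apply Finset.sum_le_sum
  intro b _
  have hne : (univ.filter (fun a => φ a = b)).Nonempty := by
    obtain ⟨a, ha⟩ := hsurj b
    exact ⟨a, by simp [ha]⟩
  have hsub : S.filter (fun a => φ a = b) ⊆ univ.filter (fun a => φ a = b) :=
    Finset.filter_subset_filter _ (Finset.subset_univ S)
  by_cases hE : (S.filter (fun a => φ a = b)).Nonempty
  · obtain ⟨s, hs⟩ := hE
    rw [Finset.mem_filter] at hs
    obtain ⟨t, htne, htφ⟩ := hS s hs.1
    have hcard2 : 2 ≤ (univ.filter (fun a => φ a = b)).card := by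
      have : ({s, t} : Finset α) ⊆ univ.filter (fun a => φ a = b) := by
        intro x hx
        simp only [Finset.mem_insert, Finset.mem_singleton] at hx
        rcases hx with rfl | rfl <;> simp [hs.2, htφ, hs.2]
      calc 2 = ({s, t} : Finset α).card := by rw [Finset.card_insert_of_notMem (by simp [htne.symm]), Finset.card_singleton]
        _ ≤ _ := Finset.card_le_card this
    have := Finset.card_le_card hsub
    omega
  · rw [Finset.not_nonempty_iff_eq_empty] at hE
    rw [hE]
    simp only [Finset.card_empty, add_zero]
    have := hne.card_pos
    omega

/-- Observation 3.3: if at least `k` connected components (fragments) of the forest `F`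
are left by an edge of `H`, then the union `F ⊔ H` has at most `f - k/2` components. -/
theorem stmt1 {V : Type*} [Fintype V] (F H : SimpleGraph V) (hF : F.IsAcyclic) (k : ℕ)
    (hk : k ≤ Nat.card {C : F.ConnectedComponent |
      ∃ u v, H.Adj u v ∧ F.connectedComponentMk u = C ∧ F.connectedComponentMk v ≠ C}) :
    (Nat.card (F ⊔ H).ConnectedComponent : ℝ) ≤
      (Nat.card F.ConnectedComponent : ℝ) - (k : ℝ) / 2 := by
  classical
  set φ : F.ConnectedComponent → (F ⊔ H).ConnectedComponent :=
    SimpleGraph.ConnectedComponent.map (SimpleGraph.Hom.ofLE le_sup_left) with hφ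
  have hsurj : Function.Surjective φ := by
    intro D
    obtain ⟨v, rfl⟩ := D.exists_rep
    exact ⟨F.connectedComponentMk v, rfl⟩
  set Sset : Set F.ConnectedComponent := {C : F.ConnectedComponent |
      ∃ u v, H.Adj u v ∧ F.connectedComponentMk u = C ∧ F.connectedComponentMk v ≠ C} with hSset
  set S : Finset F.ConnectedComponent := Sset.toFinset with hS
  have hmate : ∀ s ∈ S, ∃ t, t ≠ s ∧ φ t = φ s := by
    intro s hs
    rw [hS, Set.mem_toFinset] at hs
    obtain ⟨u, v, huv, hu, hv⟩ := hs
    refine ⟨F.connectedComponentMk v, hv, ?_⟩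
    rw [← hu]
    show (F ⊔ H).connectedComponentMk v = (F ⊔ H).connectedComponentMk u
    have hadj : (F ⊔ H).Adj u v := (SimpleGraph.sup_adj F H u v).mpr (Or.inr huv)
    exact SimpleGraph.ConnectedComponent.sound hadj.reachable.symm
  have key := aux φ hsurj S hmate
  have hk' : k ≤ S.card := by
    simpa [hS, Set.toFinset_card, ← Nat.card_eq_fintype_card] using hk
  have h1 : Nat.card (F ⊔ H).ConnectedComponent = Fintype.card (F ⊔ H).ConnectedComponent :=
    Nat.card_eq_fintype_card
  have h2 : Nat.card F.ConnectedComponent = Fintype.card F.ConnectedComponent :=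
    Nat.card_eq_fintype_card
  rw [h1, h2]
  have : 2 * Fintype.card (F ⊔ H).ConnectedComponent + k ≤ 2 * Fintype.card F.ConnectedComponent := by omega
  have hr : 2 * (Fintype.card (F ⊔ H).ConnectedComponent : ℝ) + (k : ℝ) ≤
      2 * (Fintype.card F.ConnectedComponent : ℝ) := by exact_mod_cast this
  linarith
end

section
/- Let V be a finite vertex set, let G be a simple graph on V, let A be an additive commutative group in which every element a satisfies a + a = 0 (an elementary abelian 2-group), and let name : Sym2 V → A be any labelling of potential edges. For each vertex x, let s(x) be the sum in A of name(e) over all edges e of G incident to x. Then for every subset T ⊆ V, the sum ∑_{x ∈ T} s(x) equals the sum of name(e) over all edges e of G in the cutset of (T, V∖T), i.e., over all edges of G with exactly one endpoint in T. In particular, if the cutset of (T, V∖T) is empty then ∑_{x ∈ T} s(x) = 0. -/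
/- Core XOR identity of the cutset data structure: summing, over the nodes of `T`, the
sums of the names of incident edges yields the sum of the names of the edges in the
cutset of `(T, V \ T)`; in particular if the cutset is empty the total sum is `0`. -/
open Classical in
theorem stmt2 {V : Type*} [Fintype V] (G : SimpleGraph V)
    {A : Type*} [AddCommGroup A] (hA : ∀ a : A, a + a = 0)
    (name : Sym2 V → A) (T : Finset V) :
    (∑ x ∈ T, ∑ e ∈ G.incidenceFinset x, name e) =
      (∑ e ∈ G.edgeFinset.filter (fun e => ∃ u v, e = s(u, v) ∧ u ∈ T ∧ v ∉ T), name e) ∧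
    (G.edgeFinset.filter (fun e => ∃ u v, e = s(u, v) ∧ u ∈ T ∧ v ∉ T) = ∅ →
      (∑ x ∈ T, ∑ e ∈ G.incidenceFinset x, name e) = 0) := by
  classical
  have main : (∑ x ∈ T, ∑ e ∈ G.incidenceFinset x, name e) =
      (∑ e ∈ G.edgeFinset.filter (fun e => ∃ u v, e = s(u, v) ∧ u ∈ T ∧ v ∉ T), name e) := by
    have h1 : (∑ x ∈ T, ∑ e ∈ G.incidenceFinset x, name e) =
        ∑ x ∈ T, ∑ e ∈ G.edgeFinset, if x ∈ e then name e else 0 := by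
      refine Finset.sum_congr rfl fun x _ => ?_
      rw [G.incidenceFinset_eq_filter x, Finset.sum_filter]
    rw [h1, Finset.sum_comm, Finset.sum_filter]
    refine Finset.sum_congr rfl fun e he => ?_
    rw [SimpleGraph.mem_edgeFinset] at he
    induction e using Sym2.ind with
    | _ u v =>
      have hne : u ≠ v := G.ne_of_adj he
      have hsum : (∑ x ∈ T, if x ∈ s(u, v) then name s(u, v) else 0) =
          (if u ∈ T then name s(u,v) else 0) + (if v ∈ T then name s(u,v) else 0) := by
        have hsplit : ∀ x, (if x ∈ s(u,v) then name s(u,v) else 0) =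
            (if x = u then name s(u,v) else 0) + (if x = v then name s(u,v) else 0) := by
          intro x
          by_cases hx : x = u <;> by_cases hy : x = v <;>
            simp [Sym2.mem_iff, hx, hy, hne] <;> simp_all
        calc (∑ x ∈ T, if x ∈ s(u, v) then name s(u, v) else 0)
            = ∑ x ∈ T, ((if x = u then name s(u,v) else 0) +
                (if x = v then name s(u,v) else 0)) :=
              Finset.sum_congr rfl fun x _ => hsplit x
          _ = _ := by rw [Finset.sum_add_distrib, Finset.sum_ite_eq' T u,
                Finset.sum_ite_eq' T v]
      rw [hsum]
      by_cases hu : u ∈ T <;> by_cases hv : v ∈ T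
      · rw [if_pos hu, if_pos hv, if_neg, hA]
        rintro ⟨a, b, hab, ha, hb⟩
        rw [Sym2.eq_iff] at hab
        rcases hab with ⟨rfl, rfl⟩ | ⟨rfl, rfl⟩ <;> exact hb ‹_›
      · rw [if_pos hu, if_neg hv, if_pos ⟨u, v, rfl, hu, hv⟩, add_zero]
      · rw [if_neg hu, if_pos hv, if_pos ⟨v, u, Sym2.eq_swap, hv, hu⟩, zero_add]
      · rw [if_neg hu, if_neg hv, if_neg, add_zero]
        rintro ⟨a, b, hab, ha, hb⟩
        rw [Sym2.eq_iff] at hab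
        rcases hab with ⟨rfl, rfl⟩ | ⟨rfl, rfl⟩ <;> [exact hu ha; exact hv ha]
  exact ⟨main, fun h => by rw [main, h, Finset.sum_empty]⟩
end

section
/- Let V be a finite vertex set, let G be a simple graph on V, let A be an additive commutative group in which every element a satisfies a + a = 0, and let name : Sym2 V → A be any labelling of potential edges. For each vertex x, let s(x) be the sum in A of name(e) over all edges e of G incident to x. If T ⊆ V is such that the cutset of (T, V∖T) contains exactly one edge e₀ of G, then ∑_{x ∈ T} s(x) = name(e₀); consequently, if name(e₀) ≠ 0, the sum is nonzero and recovers the name of the unique cut edge. -/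
/- Lemma 4.1: if the cutset of `(T, V \ T)` consists of exactly one edge `e₀`, then the
XOR over the nodes of `T` of the XORs of incident edge names recovers `name e₀`. -/
open Classical in
theorem stmt3 {V : Type*} [Fintype V] (G : SimpleGraph V)
    {A : Type*} [AddCommGroup A] (hA : ∀ a : A, a + a = 0)
    (name : Sym2 V → A) (T : Finset V) (e₀ : Sym2 V)
    (hcut : G.edgeFinset.filter (fun e => ∃ u v, e = s(u, v) ∧ u ∈ T ∧ v ∉ T) = {e₀}) :
    (∑ x ∈ T, ∑ e ∈ G.incidenceFinset x, name e) = name e₀ ∧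
    (name e₀ ≠ 0 → (∑ x ∈ T, ∑ e ∈ G.incidenceFinset x, name e) ≠ 0) := by
  have key : (∑ x ∈ T, ∑ e ∈ G.incidenceFinset x, name e) = name e₀ := by
    have h1 : ∀ x : V, G.incidenceFinset x = G.edgeFinset.filter (fun e => x ∈ e) := by
      intro x
      ext e
      simp [SimpleGraph.mem_incidenceFinset, SimpleGraph.incidenceSet,
        SimpleGraph.mem_edgeFinset, and_comm]
    calc (∑ x ∈ T, ∑ e ∈ G.incidenceFinset x, name e)
        = ∑ x ∈ T, ∑ e ∈ G.edgeFinset, if x ∈ e then name e else 0 := by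
          simp only [h1, Finset.sum_filter]
      _ = ∑ e ∈ G.edgeFinset, ∑ x ∈ T, if x ∈ e then name e else 0 :=
          Finset.sum_comm
      _ = ∑ e ∈ G.edgeFinset,
            if (∃ u v, e = s(u, v) ∧ u ∈ T ∧ v ∉ T) then name e else 0 := by
          apply Finset.sum_congr rfl
          intro e he
          induction e with
          | _ u v =>
            have hadj : G.Adj u v := by
              rwa [SimpleGraph.mem_edgeFinset, SimpleGraph.mem_edgeSet] at he
            have hne : u ≠ v := hadj.ne
            have hmem : ∀ x : V, x ∈ (s(u, v) : Sym2 V) ↔ x = u ∨ x = v := by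
              intro x; exact Sym2.mem_iff
            by_cases huT : u ∈ T <;> by_cases hvT : v ∈ T
            · -- both in T
              have hfil : T.filter (fun x => x ∈ (s(u, v) : Sym2 V)) = {u, v} := by
                ext x
                simp only [Finset.mem_filter, hmem, Finset.mem_insert, Finset.mem_singleton]
                constructor
                · tauto
                · rintro (rfl | rfl) <;> tauto
              have hcond : ¬ (∃ a b, (s(u, v) : Sym2 V) = s(a, b) ∧ a ∈ T ∧ b ∉ T) := by
                rintro ⟨a, b, hab, haT, hbT⟩
                rw [Sym2.eq_iff] at hab
                rcases hab with ⟨rfl, rfl⟩ | ⟨rfl, rfl⟩ <;> tauto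
              rw [if_neg hcond, ← Finset.sum_filter, hfil]
              rw [Finset.sum_pair hne]
              exact hA _
            · -- u in T, v not
              have hfil : T.filter (fun x => x ∈ (s(u, v) : Sym2 V)) = {u} := by
                ext x
                simp only [Finset.mem_filter, hmem, Finset.mem_singleton]
                constructor
                · rintro ⟨hx, rfl | rfl⟩ <;> tauto
                · rintro rfl; tauto
              have hcond : ∃ a b, (s(u, v) : Sym2 V) = s(a, b) ∧ a ∈ T ∧ b ∉ T :=
                ⟨u, v, rfl, huT, hvT⟩
              rw [if_pos hcond, ← Finset.sum_filter, hfil, Finset.sum_singleton]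
            · -- v in T, u not
              have hfil : T.filter (fun x => x ∈ (s(u, v) : Sym2 V)) = {v} := by
                ext x
                simp only [Finset.mem_filter, hmem, Finset.mem_singleton]
                constructor
                · rintro ⟨hx, rfl | rfl⟩ <;> tauto
                · rintro rfl; tauto
              have hcond : ∃ a b, (s(u, v) : Sym2 V) = s(a, b) ∧ a ∈ T ∧ b ∉ T :=
                ⟨v, u, Sym2.eq_swap, hvT, huT⟩
              rw [if_pos hcond, ← Finset.sum_filter, hfil, Finset.sum_singleton]
            · -- neither
              have hfil : T.filter (fun x => x ∈ (s(u, v) : Sym2 V)) = ∅ := by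
                ext x
                simp only [Finset.mem_filter, hmem, Finset.notMem_empty, iff_false]
                rintro ⟨hx, rfl | rfl⟩ <;> tauto
              have hcond : ¬ (∃ a b, (s(u, v) : Sym2 V) = s(a, b) ∧ a ∈ T ∧ b ∉ T) := by
                rintro ⟨a, b, hab, haT, hbT⟩
                rw [Sym2.eq_iff] at hab
                rcases hab with ⟨rfl, rfl⟩ | ⟨rfl, rfl⟩ <;> tauto
              rw [if_neg hcond, ← Finset.sum_filter, hfil, Finset.sum_empty]
      _ = ∑ e ∈ G.edgeFinset.filter (fun e => ∃ u v, e = s(u, v) ∧ u ∈ T ∧ v ∉ T),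
            name e := (Finset.sum_filter _ _).symm
      _ = name e₀ := by rw [hcut, Finset.sum_singleton]
  exact ⟨key, fun h => key ▸ h⟩
end

section
/- Let (Ω, μ) be a probability space, let W be a nonempty finite index set, and let ℓ be a natural number with 4·|W| ≤ 2^ℓ. For each w ∈ W let h_w : Ω → {0, 1, …, 2^ℓ − 1} be a random variable, such that each h_w is uniformly distributed and the family (h_w)_{w ∈ W} is pairwise independent (for all distinct w, w′ ∈ W, h_w and h_{w′} are independent). Then there exists a natural number j ≤ ℓ such that μ({ω : there is exactly one w ∈ W with h_w(ω) < 2^j}) ≥ 1/8. -/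
open MeasureTheory
open scoped ENNReal

/- Sampling lemma (Lemma 4.2): a pairwise independent family of hash values, each uniform
on `{0, …, 2^ℓ - 1}`, isolates exactly one element of `W` below threshold `2^j` for some
level `j ≤ ℓ`, with probability at least `1/8`, provided `4|W| ≤ 2^ℓ`. -/
theorem stmt4 {Ω : Type*} [MeasurableSpace Ω] (μ : Measure Ω) [IsProbabilityMeasure μ]
    {W : Type*} [Fintype W] [Nonempty W] (ℓ : ℕ)
    (hW : 4 * Fintype.card W ≤ 2 ^ ℓ)
    (h : W → Ω → Fin (2 ^ ℓ))
    (hmeas : ∀ w, Measurable (h w))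
    (hunif : ∀ w (k : Fin (2 ^ ℓ)), μ {ω | h w ω = k} = ((2 ^ ℓ : ℝ≥0∞))⁻¹)
    (hpair : ∀ w w', w ≠ w' → ∀ k k' : Fin (2 ^ ℓ),
      μ ({ω | h w ω = k} ∩ {ω | h w' ω = k'}) = μ {ω | h w ω = k} * μ {ω | h w' ω = k'}) :
    ∃ j ≤ ℓ, 1 / 8 ≤ μ {ω | ∃! w : W, (h w ω : ℕ) < 2 ^ j} := by
  classical
  have hn1 : 1 ≤ Fintype.card W := Fintype.card_pos
  have hℓ4 : 4 ≤ 2 ^ ℓ := le_trans (by omega) hW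
  have hℓ1 : 1 ≤ ℓ := by
    by_contra hc
    have : ℓ = 0 := by omega
    subst this; simp at hℓ4
  -- choose the level j
  obtain ⟨j, hjle, h2nM, h4nM⟩ :
      ∃ j ≤ ℓ, 2 * Fintype.card W * 2 ^ j ≤ 2 ^ ℓ ∧ 2 ^ ℓ < 4 * Fintype.card W * 2 ^ j := by
    set P : ℕ → Prop := fun i => 2 * Fintype.card W * 2 ^ i ≤ 2 ^ ℓ with hPdef
    have hP1 : P 1 := by simp only [hPdef, pow_one]; omega
    refine ⟨Nat.findGreatest P ℓ, Nat.findGreatest_le ℓ,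
      Nat.findGreatest_spec hℓ1 hP1, ?_⟩
    have hPj : P (Nat.findGreatest P ℓ) := Nat.findGreatest_spec hℓ1 hP1
    have hjlt : Nat.findGreatest P ℓ < ℓ := by
      rcases lt_or_eq_of_le (Nat.findGreatest_le (P := P) ℓ) with h' | h'
      · exact h'
      · exfalso
        rw [h'] at hPj
        simp only [hPdef] at hPj
        nlinarith [hℓ4, hn1]
    by_contra hc
    push_neg at hc
    have hc' : P (Nat.findGreatest P ℓ + 1) := by
      show 2 * Fintype.card W * 2 ^ (Nat.findGreatest P ℓ + 1) ≤ 2 ^ ℓ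
      calc 2 * Fintype.card W * 2 ^ (Nat.findGreatest P ℓ + 1)
          = 4 * Fintype.card W * 2 ^ (Nat.findGreatest P ℓ) := by rw [pow_succ]; ring
        _ ≤ 2 ^ ℓ := hc
    have := Nat.le_findGreatest (P := P) (Nat.succ_le_of_lt hjlt) hc'
    omega
  refine ⟨j, hjle, ?_⟩
  have hMN : 2 ^ j ≤ 2 ^ ℓ := Nat.pow_le_pow_right (by norm_num) hjle
  -- elementary events
  have hunif' : ∀ w (k : Fin (2 ^ ℓ)), μ {ω | h w ω = k} = (2 ^ ℓ : ℝ≥0∞)⁻¹ := hunif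
  set A : W → Set Ω := fun w => {ω | (h w ω : ℕ) < 2 ^ j} with hAdef
  have hAmeas : ∀ w, MeasurableSet (A w) := fun w =>
    (hmeas w) (MeasurableSet.of_discrete (s := {k : Fin (2 ^ ℓ) | (k : ℕ) < 2 ^ j}))
  set S : Finset (Fin (2 ^ ℓ)) := Finset.univ.filter (fun k => (k : ℕ) < 2 ^ j) with hSdef
  have hSA : ∀ w, A w = ⋃ k ∈ S, {ω | h w ω = k} := by
    intro w
    ext ω
    simp only [hAdef, Set.mem_setOf_eq, Set.mem_iUnion, hSdef, Finset.mem_filter,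
      Finset.mem_univ, true_and]
    constructor
    · intro hlt; exact ⟨h w ω, hlt, rfl⟩
    · rintro ⟨k, hk, he⟩; rw [he]; exact hk
  have hScard : S.card = 2 ^ j := by
    have hb : ∀ m ∈ Finset.range (2 ^ j), m < 2 ^ ℓ := fun m hm =>
      lt_of_lt_of_le (Finset.mem_range.mp hm) hMN
    have : S = (Finset.range (2 ^ j)).attachFin hb := by
      ext k
      simp [hSdef, Finset.mem_attachFin]
    rw [this, Finset.card_attachFin, Finset.card_range]
  have hsing : ∀ w (k : Fin (2 ^ ℓ)), MeasurableSet {ω | h w ω = k} := fun w k =>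
    (hmeas w) (measurableSet_singleton k)
  have hμA : ∀ w, μ (A w) = ((2 ^ j : ℕ) : ℝ≥0∞) * (2 ^ ℓ : ℝ≥0∞)⁻¹ := by
    intro w
    rw [hSA w, measure_biUnion_finset ?_ (fun k _ => hsing w k)]
    · rw [Finset.sum_congr rfl (fun k _ => hunif' w k), Finset.sum_const, hScard,
        nsmul_eq_mul]
    · intro k hk k' hk' hkk'
      apply Set.disjoint_left.mpr
      intro ω h1 h2
      exact hkk' (h1.symm.trans h2)
  have hμAA : ∀ w w', w ≠ w' →
      μ (A w ∩ A w') ≤ (((2 ^ j : ℕ) : ℝ≥0∞) * (2 ^ ℓ : ℝ≥0∞)⁻¹) ^ 2 := by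
    intro w w' hne
    have hsub : A w ∩ A w' ⊆ ⋃ k ∈ S, ⋃ k' ∈ S, ({ω | h w ω = k} ∩ {ω | h w' ω = k'}) := by
      rintro ω ⟨h1, h2⟩
      refine Set.mem_iUnion₂.mpr ⟨h w ω, ?_, Set.mem_iUnion₂.mpr ⟨h w' ω, ?_, rfl, rfl⟩⟩
      · simp only [hSdef, Finset.mem_filter, Finset.mem_univ, true_and]; exact h1
      · simp only [hSdef, Finset.mem_filter, Finset.mem_univ, true_and]; exact h2
    calc μ (A w ∩ A w') ≤ μ (⋃ k ∈ S, ⋃ k' ∈ S, ({ω | h w ω = k} ∩ {ω | h w' ω = k'})) :=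
          measure_mono hsub
      _ ≤ ∑ k ∈ S, μ (⋃ k' ∈ S, ({ω | h w ω = k} ∩ {ω | h w' ω = k'})) :=
          measure_biUnion_finset_le S _
      _ ≤ ∑ k ∈ S, ∑ k' ∈ S, μ ({ω | h w ω = k} ∩ {ω | h w' ω = k'}) :=
          Finset.sum_le_sum fun k _ => measure_biUnion_finset_le S _
      _ = ∑ k ∈ S, ∑ k' ∈ S, (2 ^ ℓ : ℝ≥0∞)⁻¹ * (2 ^ ℓ : ℝ≥0∞)⁻¹ := by
          refine Finset.sum_congr rfl fun k _ => Finset.sum_congr rfl fun k' _ => ?_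
          rw [hpair w w' hne k k', hunif' w k, hunif' w' k']
      _ = (((2 ^ j : ℕ) : ℝ≥0∞) * (2 ^ ℓ : ℝ≥0∞)⁻¹) ^ 2 := by
          simp only [Finset.sum_const, hScard, nsmul_eq_mul]
          ring
  -- the isolation events
  set B : W → Set Ω := fun w => A w ∩ ⋂ w', ⋂ (_ : w' ≠ w), (A w')ᶜ with hBdef
  have hBmeas : ∀ w, MeasurableSet (B w) := fun w =>
    (hAmeas w).inter (MeasurableSet.iInter fun w' => MeasurableSet.iInter fun _ =>
      (hAmeas w').compl)
  have hBmem : ∀ w ω, ω ∈ B w ↔ ω ∈ A w ∧ ∀ w', w' ≠ w → ω ∉ A w' := by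
    intro w ω
    simp [hBdef]
  have hBsubE : (⋃ w, B w) ⊆ {ω | ∃! w : W, (h w ω : ℕ) < 2 ^ j} := by
    rintro ω hω
    obtain ⟨w, hw⟩ := Set.mem_iUnion.mp hω
    obtain ⟨h1, h2⟩ := (hBmem w ω).mp hw
    refine ⟨w, h1, fun y hy => ?_⟩
    by_contra hne
    exact h2 y hne hy
  have hBdisj : Pairwise (Function.onFun Disjoint B) := by
    intro w w' hne
    apply Set.disjoint_left.mpr
    intro ω h1 h2
    exact ((hBmem w' ω).mp h2).2 w hne ((hBmem w ω).mp h1).1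
  have hsumB : ∑ w, μ (B w) ≤ μ {ω | ∃! w : W, (h w ω : ℕ) < 2 ^ j} := by
    calc ∑ w, μ (B w) = ∑' w, μ (B w) := (tsum_fintype _).symm
      _ = μ (⋃ w, B w) := (measure_iUnion hBdisj hBmeas).symm
      _ ≤ _ := measure_mono hBsubE
  -- covering inequality per w
  have hcover : ∀ w, A w ⊆ B w ∪ ⋃ w' ∈ Finset.univ.erase w, (A w ∩ A w') := by
    intro w ω hω
    by_cases hc : ∀ w', w' ≠ w → ω ∉ A w'
    · left; exact (hBmem w ω).mpr ⟨hω, hc⟩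
    · right
      push_neg at hc
      obtain ⟨w', hne, hmem⟩ := hc
      exact Set.mem_iUnion₂.mpr ⟨w', Finset.mem_erase.mpr ⟨hne, Finset.mem_univ _⟩, hω, hmem⟩
  have hAle : ∀ w, μ (A w) ≤ μ (B w) +
      ((Fintype.card W - 1 : ℕ) : ℝ≥0∞) * (((2 ^ j : ℕ) : ℝ≥0∞) * (2 ^ ℓ : ℝ≥0∞)⁻¹) ^ 2 := by
    intro w
    calc μ (A w) ≤ μ (B w ∪ ⋃ w' ∈ Finset.univ.erase w, (A w ∩ A w')) :=
          measure_mono (hcover w)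
      _ ≤ μ (B w) + μ (⋃ w' ∈ Finset.univ.erase w, (A w ∩ A w')) := measure_union_le _ _
      _ ≤ μ (B w) + ∑ w' ∈ Finset.univ.erase w, μ (A w ∩ A w') :=
          add_le_add_right (measure_biUnion_finset_le _ _) _
      _ ≤ _ := by
          refine add_le_add_right ?_ _
          have hb := Finset.sum_le_card_nsmul (Finset.univ.erase w)
            (fun w' => μ (A w ∩ A w')) ((((2 ^ j : ℕ) : ℝ≥0∞) * (2 ^ ℓ : ℝ≥0∞)⁻¹) ^ 2)
            (fun w' hw' => hμAA w w' (Finset.mem_erase.mp hw').1.symm)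
          rwa [Finset.card_erase_of_mem (Finset.mem_univ w), Finset.card_univ,
            nsmul_eq_mul] at hb
  -- sum over w
  have key : ((Fintype.card W : ℕ) : ℝ≥0∞) * (((2 ^ j : ℕ) : ℝ≥0∞) * (2 ^ ℓ : ℝ≥0∞)⁻¹) ≤
      μ {ω | ∃! w : W, (h w ω : ℕ) < 2 ^ j} +
      ((Fintype.card W : ℕ) : ℝ≥0∞) * (((Fintype.card W - 1 : ℕ) : ℝ≥0∞) *
        (((2 ^ j : ℕ) : ℝ≥0∞) * (2 ^ ℓ : ℝ≥0∞)⁻¹) ^ 2) := by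
    have h1 : ∑ w : W, μ (A w) =
        ((Fintype.card W : ℕ) : ℝ≥0∞) * (((2 ^ j : ℕ) : ℝ≥0∞) * (2 ^ ℓ : ℝ≥0∞)⁻¹) := by
      rw [Finset.sum_congr rfl (fun w _ => hμA w), Finset.sum_const, Finset.card_univ,
        nsmul_eq_mul]
    calc ((Fintype.card W : ℕ) : ℝ≥0∞) * (((2 ^ j : ℕ) : ℝ≥0∞) * (2 ^ ℓ : ℝ≥0∞)⁻¹)
        = ∑ w : W, μ (A w) := h1.symm
      _ ≤ ∑ w : W, (μ (B w) +
            ((Fintype.card W - 1 : ℕ) : ℝ≥0∞) *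
              (((2 ^ j : ℕ) : ℝ≥0∞) * (2 ^ ℓ : ℝ≥0∞)⁻¹) ^ 2) :=
          Finset.sum_le_sum fun w _ => hAle w
      _ = (∑ w, μ (B w)) + ((Fintype.card W : ℕ) : ℝ≥0∞) *
            (((Fintype.card W - 1 : ℕ) : ℝ≥0∞) *
              (((2 ^ j : ℕ) : ℝ≥0∞) * (2 ^ ℓ : ℝ≥0∞)⁻¹) ^ 2) := by
          rw [Finset.sum_add_distrib, Finset.sum_const, Finset.card_univ, nsmul_eq_mul]
      _ ≤ _ := add_le_add_left hsumB _
  -- pass to the reals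
  set t : ℝ := (μ {ω | ∃! w : W, (h w ω : ℕ) < 2 ^ j}).toReal with htdef
  have hfin : μ {ω | ∃! w : W, (h w ω : ℕ) < 2 ^ j} ≠ ∞ := measure_ne_top μ _
  have keyR : ((Fintype.card W : ℝ)) * (((2 ^ j : ℕ) : ℝ) * ((2 : ℝ) ^ ℓ)⁻¹) ≤
      t + ((Fintype.card W : ℝ)) * (((Fintype.card W - 1 : ℕ) : ℝ) *
        (((2 ^ j : ℕ) : ℝ) * ((2 : ℝ) ^ ℓ)⁻¹) ^ 2) := by
    have hne : μ {ω | ∃! w : W, (h w ω : ℕ) < 2 ^ j} +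
        ((Fintype.card W : ℕ) : ℝ≥0∞) * (((Fintype.card W - 1 : ℕ) : ℝ≥0∞) *
          (((2 ^ j : ℕ) : ℝ≥0∞) * (2 ^ ℓ : ℝ≥0∞)⁻¹) ^ 2) ≠ ∞ := by
      refine ENNReal.add_ne_top.mpr ⟨hfin, ?_⟩
      refine ENNReal.mul_ne_top (ENNReal.natCast_ne_top _) ?_
      refine ENNReal.mul_ne_top (ENNReal.natCast_ne_top _) ?_
      refine ENNReal.pow_ne_top ?_
      refine ENNReal.mul_ne_top (ENNReal.natCast_ne_top _) ?_
      simp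
    have hc2 : ((Fintype.card W : ℕ) : ℝ≥0∞) * (((Fintype.card W - 1 : ℕ) : ℝ≥0∞) *
        (((2 ^ j : ℕ) : ℝ≥0∞) * (2 ^ ℓ : ℝ≥0∞)⁻¹) ^ 2) ≠ ∞ := by
      intro hx
      exact hne (by rw [ENNReal.add_eq_top]; right; exact hx)
    have h3 := ENNReal.toReal_mono hne key
    rw [ENNReal.toReal_add hfin hc2] at h3
    simp only [ENNReal.toReal_mul, ENNReal.toReal_pow, ENNReal.toReal_inv,
      ENNReal.toReal_natCast, ENNReal.toReal_ofNat] at h3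
    exact h3
  -- conclude numerically
  have h18 : (1 / 8 : ℝ) ≤ t := by
    have hNpos : (0 : ℝ) < (2 : ℝ) ^ ℓ := by positivity
    have hNe : ((2 : ℝ) ^ ℓ) ≠ 0 := ne_of_gt hNpos
    set a : ℝ := (Fintype.card W : ℝ) * ((2 ^ j : ℕ) : ℝ) with hadef
    set c : ℝ := (Fintype.card W : ℝ) * (((Fintype.card W - 1 : ℕ) : ℝ) *
      (((2 ^ j : ℕ) : ℝ)) ^ 2) with hcdef
    have keyR' : a * ((2 : ℝ) ^ ℓ)⁻¹ ≤ t + c * (((2 : ℝ) ^ ℓ)⁻¹) ^ 2 := by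
      calc a * ((2 : ℝ) ^ ℓ)⁻¹
          = (Fintype.card W : ℝ) * (((2 ^ j : ℕ) : ℝ) * ((2 : ℝ) ^ ℓ)⁻¹) := by ring
        _ ≤ t + ((Fintype.card W : ℝ)) * (((Fintype.card W - 1 : ℕ) : ℝ) *
              (((2 ^ j : ℕ) : ℝ) * ((2 : ℝ) ^ ℓ)⁻¹) ^ 2) := keyR
        _ = t + c * (((2 : ℝ) ^ ℓ)⁻¹) ^ 2 := by ring
    have h1 : a * (2 : ℝ) ^ ℓ ≤ t * ((2 : ℝ) ^ ℓ) ^ 2 + c := by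
      have h2 := mul_le_mul_of_nonneg_right keyR' (le_of_lt (pow_pos hNpos 2))
      have e1 : a * ((2 : ℝ) ^ ℓ)⁻¹ * ((2 : ℝ) ^ ℓ) ^ 2 = a * (2 : ℝ) ^ ℓ := by
        field_simp
      have e2 : (t + c * (((2 : ℝ) ^ ℓ)⁻¹) ^ 2) * ((2 : ℝ) ^ ℓ) ^ 2 =
          t * ((2 : ℝ) ^ ℓ) ^ 2 + c := by
        field_simp
      rw [e1, e2] at h2
      exact h2
    -- cast the arithmetic facts
    have hc_le : c ≤ a ^ 2 := by
      rw [hcdef, hadef]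
      have hd : ((Fintype.card W - 1 : ℕ) : ℝ) ≤ (Fintype.card W : ℝ) :=
        Nat.cast_le.mpr (Nat.sub_le _ _)
      have hd0 : (0 : ℝ) ≤ ((Fintype.card W - 1 : ℕ) : ℝ) := Nat.cast_nonneg _
      have h6 : (Fintype.card W : ℝ) * ((2 ^ j : ℕ) : ℝ) ^ 2 * ((Fintype.card W - 1 : ℕ) : ℝ) ≤
          (Fintype.card W : ℝ) * ((2 ^ j : ℕ) : ℝ) ^ 2 * (Fintype.card W : ℝ) :=
        mul_le_mul_of_nonneg_left hd (by positivity)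
      nlinarith [h6]
    have ha2N : 2 * a ≤ (2 : ℝ) ^ ℓ := by
      have h5 : ((2 * Fintype.card W * 2 ^ j : ℕ) : ℝ) ≤ ((2 ^ ℓ : ℕ) : ℝ) :=
        Nat.cast_le.mpr h2nM
      push_cast at h5
      rw [hadef]
      push_cast
      linarith
    have haN : (2 : ℝ) ^ ℓ ≤ 4 * a := by
      have h5 : ((2 ^ ℓ : ℕ) : ℝ) ≤ ((4 * Fintype.card W * 2 ^ j : ℕ) : ℝ) :=
        Nat.cast_le.mpr (le_of_lt h4nM)
      push_cast at h5
      rw [hadef]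
      push_cast
      linarith
    have ha0 : 0 ≤ a := by rw [hadef]; positivity
    have hN2pos : (0 : ℝ) < ((2 : ℝ) ^ ℓ) ^ 2 := by positivity
    nlinarith [h1, hc_le, mul_le_mul_of_nonneg_left ha2N ha0,
      mul_le_mul_of_nonneg_right haN (le_of_lt hNpos), hN2pos]
  calc (1 / 8 : ℝ≥0∞) = ENNReal.ofReal (1 / 8) := by
        rw [ENNReal.ofReal_div_of_pos (by norm_num)]
        norm_num [ENNReal.ofReal_one, ENNReal.ofReal_ofNat]
    _ ≤ μ {ω | ∃! w : W, (h w ω : ℕ) < 2 ^ j} := ENNReal.ofReal_le_of_le_toReal h18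
end

section
/- Let (Ω, μ) be a probability space, let W be a nonempty finite index set, let ℓ be a natural number, and for each w ∈ W let h_w : Ω → {0, 1, …, 2^ℓ − 1} be a random variable, such that each h_w is uniformly distributed and the family (h_w)_{w ∈ W} is pairwise independent. Then for every natural number j ≤ ℓ, setting q = 2^j/2^ℓ, the probability that exactly one w ∈ W satisfies h_w < 2^j is at least |W| · q · (1 − (|W| − 1)·q). -/
open MeasureTheory
open scoped ENNReal

/- Key inequality in the sampling lemma: for every `j ≤ ℓ`, with `q = 2^j / 2^ℓ`, the
probability that exactly one `w ∈ W` satisfies `h_w < 2^j` is at least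
`|W| · q · (1 - (|W| - 1) · q)`. -/
theorem stmt5 {Ω : Type*} [MeasurableSpace Ω] (μ : Measure Ω) [IsProbabilityMeasure μ]
    {W : Type*} [Fintype W] [Nonempty W] (ℓ : ℕ)
    (h : W → Ω → Fin (2 ^ ℓ))
    (hmeas : ∀ w, Measurable (h w))
    (hunif : ∀ w (k : Fin (2 ^ ℓ)), μ {ω | h w ω = k} = ((2 ^ ℓ : ℝ≥0∞))⁻¹)
    (hpair : ∀ w w', w ≠ w' → ∀ k k' : Fin (2 ^ ℓ),
      μ ({ω | h w ω = k} ∩ {ω | h w' ω = k'}) = μ {ω | h w ω = k} * μ {ω | h w' ω = k'})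
    (j : ℕ) (hj : j ≤ ℓ) :
    ENNReal.ofReal ((Fintype.card W : ℝ) * ((2 ^ j : ℝ) / 2 ^ ℓ) *
        (1 - ((Fintype.card W : ℝ) - 1) * ((2 ^ j : ℝ) / 2 ^ ℓ))) ≤
      μ {ω | ∃! w : W, (h w ω : ℕ) < 2 ^ j} := by
  classical
  set n := Fintype.card W with hn
  have hn1 : 1 ≤ n := Fintype.card_pos
  have h2 : (2:ℕ)^j ≤ 2^ℓ := Nat.pow_le_pow_right (by norm_num) hj
  set q : ℝ≥0∞ := (2^j : ℝ≥0∞) * ((2^ℓ : ℝ≥0∞))⁻¹ with hqdef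
  set A : W → Set Ω := fun w => {ω | (h w ω : ℕ) < 2^j} with hAdef
  set s : Finset (Fin (2^ℓ)) := Finset.univ.filter (fun k => (k:ℕ) < 2^j) with hsdef
  have hscard : s.card = 2^j := by
    have : s = Finset.map (Fin.castLEEmb h2) Finset.univ := by
      ext k
      simp only [hsdef, Finset.mem_filter, Finset.mem_univ, true_and, Finset.mem_map,
        Fin.castLEEmb, Function.Embedding.coeFn_mk]
      constructor
      · intro hk
        exact ⟨⟨(k:ℕ), hk⟩, by simp [Fin.castLE, Fin.ext_iff]⟩
      · rintro ⟨a, rfl⟩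
        simp
    rw [this, Finset.card_map, Finset.card_univ, Fintype.card_fin]
  have hAeq : ∀ w, A w = ⋃ k ∈ s, {ω | h w ω = k} := by
    intro w
    ext ω
    simp [hAdef, hsdef, eq_comm]
  have hmeasK : ∀ w (k : Fin (2^ℓ)), MeasurableSet {ω | h w ω = k} := by
    intro w k
    exact hmeas w (measurableSet_singleton k)
  have hmeasA : ∀ w, MeasurableSet (A w) := by
    intro w
    rw [hAeq w]
    exact s.measurableSet_biUnion (fun k _ => hmeasK w k)
  have hμA : ∀ w, μ (A w) = q := by
    intro w
    rw [hAeq w, measure_biUnion_finset]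
    · simp only [hunif]
      rw [Finset.sum_const, hscard, nsmul_eq_mul]
      simp [hqdef]
    · intro k _ k' _ hkk'
      refine Set.disjoint_left.2 ?_
      rintro ω (hk : h w ω = k) (hk' : h w ω = k')
      exact hkk' (hk ▸ hk')
    · exact fun k _ => hmeasK w k
  have hμAA : ∀ w w', w ≠ w' → μ (A w ∩ A w') = q * q := by
    intro w w' hww'
    have : A w ∩ A w' = ⋃ p ∈ s ×ˢ s, ({ω | h w ω = (p : Fin (2^ℓ) × Fin (2^ℓ)).1} ∩ {ω | h w' ω = p.2}) := by
      ext ω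
      simp [hAdef, hsdef, eq_comm]
    rw [this, measure_biUnion_finset]
    · have : ∀ p ∈ s ×ˢ s, μ ({ω | h w ω = (p : Fin (2^ℓ) × Fin (2^ℓ)).1} ∩ {ω | h w' ω = p.2})
          = ((2^ℓ : ℝ≥0∞))⁻¹ * ((2^ℓ : ℝ≥0∞))⁻¹ := by
        intro p _
        rw [hpair w w' hww' p.1 p.2, hunif, hunif]
      rw [Finset.sum_congr rfl this, Finset.sum_const, Finset.card_product, hscard, nsmul_eq_mul]
      simp only [hqdef]
      push_cast
      ring
    · intro p _ p' _ hpp'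
      refine Set.disjoint_left.2 ?_
      rintro ω ⟨h1, h2⟩ ⟨h1', h2'⟩
      exact hpp' (Prod.ext (h1 ▸ h1' ▸ rfl : p.1 = p'.1) (h2 ▸ h2' ▸ rfl))
    · exact fun p _ => (hmeasK w p.1).inter (hmeasK w' p.2)
  -- B w : exactly w
  set B : W → Set Ω := fun w => A w \ ⋃ w' ∈ Finset.univ.erase w, A w' with hBdef
  have hmeasB : ∀ w, MeasurableSet (B w) := fun w =>
    (hmeasA w).diff ((Finset.univ.erase w).measurableSet_biUnion (fun w' _ => hmeasA w'))
  have hBsub : ∀ w, B w ⊆ {ω | ∃! w : W, (h w ω : ℕ) < 2^j} := by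
    intro w ω hω
    obtain ⟨hωA, hωn⟩ := hω
    refine ⟨w, hωA, ?_⟩
    intro w' hw'
    by_contra hne
    exact hωn (Set.mem_biUnion (Finset.mem_erase.2 ⟨hne, Finset.mem_univ _⟩) hw')
  have hBdisj : ∀ w w', w ≠ w' → Disjoint (B w) (B w') := by
    intro w w' hww'
    refine Set.disjoint_left.2 ?_
    rintro ω ⟨hωA, _⟩ ⟨_, hωn'⟩
    exact hωn' (Set.mem_biUnion (Finset.mem_erase.2 ⟨hww', Finset.mem_univ _⟩) hωA)
  -- μ(A w) ≤ μ(B w) + Σ_{w'≠w} μ(A w ∩ A w')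
  have hkey1 : ∀ w, μ (A w) ≤ μ (B w) + ∑ w' ∈ Finset.univ.erase w, μ (A w ∩ A w') := by
    intro w
    have hcov : A w ⊆ B w ∪ ⋃ w' ∈ Finset.univ.erase w, (A w ∩ A w') := by
      intro ω hω
      by_cases hc : ω ∈ ⋃ w' ∈ Finset.univ.erase w, A w'
      · right
        obtain ⟨w', hw', hω'⟩ := Set.mem_iUnion₂.1 hc
        exact Set.mem_biUnion hw' ⟨hω, hω'⟩
      · exact Or.inl ⟨hω, hc⟩
    calc μ (A w) ≤ μ (B w ∪ ⋃ w' ∈ Finset.univ.erase w, (A w ∩ A w')) := measure_mono hcov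
      _ ≤ μ (B w) + μ (⋃ w' ∈ Finset.univ.erase w, (A w ∩ A w')) := measure_union_le _ _
      _ ≤ μ (B w) + ∑ w' ∈ Finset.univ.erase w, μ (A w ∩ A w') := by
          gcongr
          exact measure_biUnion_finset_le _ _
  have hsumB : ∑ w : W, μ (B w) ≤ μ {ω | ∃! w : W, (h w ω : ℕ) < 2^j} := by
    rw [← measure_biUnion_finset (fun w _ w' _ hww' => hBdisj w w' hww') (fun w _ => hmeasB w)]
    exact measure_mono (Set.iUnion₂_subset fun w _ => hBsub w)
  have hkey : (n : ℝ≥0∞) * q ≤ μ {ω | ∃! w : W, (h w ω : ℕ) < 2^j} + (n : ℝ≥0∞) * ((n-1 : ℕ) : ℝ≥0∞) * (q * q) := by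
    calc (n : ℝ≥0∞) * q = ∑ w : W, μ (A w) := by
          simp [hμA, Finset.sum_const, hn]
      _ ≤ ∑ w : W, (μ (B w) + ∑ w' ∈ Finset.univ.erase w, μ (A w ∩ A w')) :=
          Finset.sum_le_sum (fun w _ => hkey1 w)
      _ = (∑ w : W, μ (B w)) + ∑ w : W, ∑ w' ∈ Finset.univ.erase w, μ (A w ∩ A w') := by
          rw [Finset.sum_add_distrib]
      _ ≤ μ {ω | ∃! w : W, (h w ω : ℕ) < 2^j} + (n : ℝ≥0∞) * ((n-1 : ℕ) : ℝ≥0∞) * (q * q) := by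
          refine add_le_add hsumB (le_of_eq ?_)
          have hin : ∀ w : W, ∑ w' ∈ Finset.univ.erase w, μ (A w ∩ A w') = ((n-1 : ℕ) : ℝ≥0∞) * (q * q) := by
            intro w
            rw [Finset.sum_congr rfl (fun w' hw' => hμAA w w' (Ne.symm (Finset.mem_erase.1 hw').1)),
              Finset.sum_const, nsmul_eq_mul, Finset.card_erase_of_mem (Finset.mem_univ w),
              Finset.card_univ]
          rw [Finset.sum_congr rfl (fun w _ => hin w), Finset.sum_const, nsmul_eq_mul,
            Finset.card_univ]
          ring
  -- final arithmetic
  set E := {ω | ∃! w : W, (h w ω : ℕ) < 2^j} with hE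
  have hqr : q.toReal = (2 ^ j : ℝ) / 2 ^ ℓ := by
    rw [hqdef]
    rw [ENNReal.toReal_mul, ENNReal.toReal_inv]
    simp [ENNReal.toReal_pow, div_eq_mul_inv]
  have hfin : μ E + (n : ℝ≥0∞) * ((n-1 : ℕ) : ℝ≥0∞) * (q * q) ≠ ⊤ := by
    refine ENNReal.add_ne_top.2 ⟨measure_ne_top μ E, ?_⟩
    refine ENNReal.mul_ne_top (ENNReal.mul_ne_top (by simp) (by simp)) ?_
    refine ENNReal.mul_ne_top ?_ ?_ <;>
      · rw [hqdef]; exact ENNReal.mul_ne_top (by simp) (ENNReal.inv_ne_top.2 (by positivity))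
  have hkeyR : (n : ℝ) * q.toReal ≤ (μ E).toReal + (n : ℝ) * ((n:ℝ) - 1) * (q.toReal * q.toReal) := by
    have := ENNReal.toReal_mono hfin hkey
    rw [ENNReal.toReal_add (measure_ne_top μ E)
      (by exact fun hc => hfin (ENNReal.add_eq_top.2 (Or.inr hc)))] at this
    have hcast : ((n - 1 : ℕ) : ℝ) = (n : ℝ) - 1 := by
      rw [Nat.cast_sub hn1]; simp
    simp only [ENNReal.toReal_mul, ENNReal.toReal_natCast, hcast] at this
    exact this
  rw [← ENNReal.ofReal_toReal (measure_ne_top μ E)]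
  apply ENNReal.ofReal_le_ofReal
  rw [← hqr]
  nlinarith [hkeyR]
end

section
/- Let (Ω, μ) be a probability space, let p, α ∈ (0,1], let c > 0 be real, let n ≥ 2 be an integer, let a = ⌈log_{4/(4−p)} n⌉, and let top be an integer with top ≥ max{2a/α, 8·c·ln(n)/α}. Let B_0, …, B_{top−1} be mutually independent events with μ(B_ℓ) = α for every ℓ. Suppose f : Ω → (ℕ → ℕ) satisfies, for every ω ∈ Ω: f(ω)(0) ≤ n; f(ω)(ℓ+1) ≤ f(ω)(ℓ) for all ℓ; and whenever ω ∈ B_ℓ with ℓ < top, f(ω)(ℓ+1) ≤ (1 − p/4)·f(ω)(ℓ). Assume each map ω ↦ f(ω)(ℓ) is measurable. Then μ({ω : f(ω)(top) ≥ 2}) ≤ n^{−c}. -/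
open MeasureTheory ProbabilityTheory
open scoped ENNReal

/- Abstract form of Lemma 3.4: with `top ≥ max{2a/α, 8c·ln n/α}` independent successful-tier
events of probability `α`, where each success multiplies the nonincreasing fragment count
by at most `1 - p/4` and the count starts at most `n`, the probability that the top-tier
count is at least `2` is at most `n^{-c}`. -/
theorem stmt9 {Ω : Type*} [MeasurableSpace Ω] (μ : Measure Ω) [IsProbabilityMeasure μ]
    (p α : ℝ) (hp0 : 0 < p) (hp1 : p ≤ 1) (hα0 : 0 < α) (hα1 : α ≤ 1)
    (c : ℝ) (hc : 0 < c) (n : ℕ) (hn : 2 ≤ n)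
    (a : ℕ) (ha : a = ⌈Real.logb (4 / (4 - p)) n⌉₊)
    (top : ℕ) (htop : max (2 * (a : ℝ) / α) (8 * c * Real.log n / α) ≤ (top : ℝ))
    (B : Fin top → Set Ω) (hBmeas : ∀ ℓ, MeasurableSet (B ℓ))
    (hBindep : iIndepSet B μ) (hBα : ∀ ℓ, μ (B ℓ) = ENNReal.ofReal α)
    (f : Ω → ℕ → ℕ)
    (hf0 : ∀ ω, f ω 0 ≤ n)
    (hfmono : ∀ ω ℓ, f ω (ℓ + 1) ≤ f ω ℓ)
    (hfB : ∀ (ℓ : Fin top), ∀ ω ∈ B ℓ,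
      (f ω ((ℓ : ℕ) + 1) : ℝ) ≤ (1 - p / 4) * (f ω (ℓ : ℕ) : ℝ))
    (hfmeas : ∀ ℓ : ℕ, Measurable fun ω => f ω ℓ) :
    μ {ω | 2 ≤ f ω top} ≤ (n : ℝ≥0∞) ^ (-c) := by
  classical
  have hn0 : (0:ℝ) < n := by positivity
  have hn1 : (1:ℝ) < n := by exact_mod_cast hn.trans_lt' one_lt_two
  have hlogn : 0 < Real.log n := Real.log_pos hn1
  -- base
  have h4p : (0:ℝ) < 4 - p := by linarith
  set b : ℝ := 4 / (4 - p) with hb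
  have hb1 : 1 < b := by
    rw [hb, lt_div_iff₀ h4p]; linarith
  have hb0 : 0 < b := lt_trans one_pos hb1
  have hq : 1 - p / 4 = b⁻¹ := by
    rw [hb]; field_simp
  have hq0 : 0 ≤ 1 - p / 4 := by linarith
  have hq1 : 1 - p / 4 ≤ 1 := by linarith
  -- (1 - p/4)^a * n ≤ 1
  have hkey : (1 - p / 4) ^ a * (n : ℝ) ≤ 1 := by
    have hla : Real.logb b n ≤ (a : ℝ) := by
      rw [ha]; exact Nat.le_ceil _
    have hnb : (n : ℝ) ≤ b ^ a := by
      have := (Real.rpow_le_rpow_left_iff (x := b) hb1).mpr hla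
      rwa [Real.rpow_logb hb0 (ne_of_gt hb1) hn0, Real.rpow_natCast] at this
    rw [hq]
    calc b⁻¹ ^ a * (n : ℝ) ≤ b⁻¹ ^ a * b ^ a := by
          apply mul_le_mul_of_nonneg_left hnb (by positivity)
      _ = 1 := by rw [← mul_pow, inv_mul_cancel₀ (ne_of_gt hb0), one_pow]
  -- indicator random variables
  set X : Fin top → Ω → ℝ := fun i => (B i).indicator fun _ => 1 with hX
  have hXmeas : ∀ i, Measurable (X i) := fun i =>
    measurable_const.indicator (hBmeas i)
  set S : Ω → ℝ := ∑ i, X i with hS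
  have hSapp : ∀ ω, S ω = ((Finset.univ.filter fun i : Fin top => ω ∈ B i).card : ℝ) := by
    intro ω
    rw [hS, Finset.sum_apply, ← Finset.sum_boole]
    refine Finset.sum_congr rfl fun i _ => ?_
    simp [hX, Set.indicator_apply]
  -- Step 1: inclusion
  have hincl : {ω | 2 ≤ f ω top} ⊆ {ω | S ω ≤ (a : ℝ)} := by
    intro ω hω
    simp only [Set.mem_setOf_eq] at hω ⊢
    by_contra hlt
    push_neg at hlt
    rw [hSapp] at hlt
    have hacard : a ≤ (Finset.univ.filter fun i : Fin top => ω ∈ B i).card := by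
      exact_mod_cast hlt.le
    -- induction bound
    have hind : ∀ k, k ≤ top → (f ω k : ℝ) ≤
        (1 - p / 4) ^ (Finset.univ.filter fun i : Fin top => (i : ℕ) < k ∧ ω ∈ B i).card
          * (n : ℝ) := by
      intro k hk
      induction k with
      | zero =>
        have he : (Finset.univ.filter fun i : Fin top => (i : ℕ) < 0 ∧ ω ∈ B i) = ∅ := by
          ext i; simp
        rw [he]
        simpa using (Nat.cast_le.mpr (hf0 ω) : (f ω 0 : ℝ) ≤ n)
      | succ k ih =>
        have hk' : k < top := hk
        have ihk := ih (le_of_lt hk')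
        set ι : Fin top := ⟨k, hk'⟩ with hι
        by_cases hmem : ω ∈ B ι
        · have hset : (Finset.univ.filter fun i : Fin top => (i : ℕ) < k + 1 ∧ ω ∈ B i)
              = insert ι (Finset.univ.filter fun i : Fin top => (i : ℕ) < k ∧ ω ∈ B i) := by
            ext j
            simp only [Finset.mem_filter, Finset.mem_univ, true_and, Finset.mem_insert]
            constructor
            · rintro ⟨hjk, hjB⟩
              rcases Nat.lt_succ_iff_lt_or_eq.mp hjk with h | h
              · exact Or.inr ⟨h, hjB⟩
              · exact Or.inl (Fin.ext h)
            · rintro (rfl | ⟨hjk, hjB⟩)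
              · exact ⟨Nat.lt_succ_self _, hmem⟩
              · exact ⟨Nat.lt_succ_of_lt hjk, hjB⟩
          have hnotin : ι ∉ (Finset.univ.filter fun i : Fin top => (i : ℕ) < k ∧ ω ∈ B i) := by
            simp [hι]
          rw [hset, Finset.card_insert_of_notMem hnotin, pow_succ]
          calc (f ω (k + 1) : ℝ) ≤ (1 - p / 4) * (f ω k : ℝ) := hfB ι ω hmem
            _ ≤ (1 - p / 4) * ((1 - p / 4) ^ _ * (n : ℝ)) :=
                mul_le_mul_of_nonneg_left ihk hq0
            _ = (1 - p / 4) ^ _ * (1 - p / 4) * (n : ℝ) := by ring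
        · have hset : (Finset.univ.filter fun i : Fin top => (i : ℕ) < k + 1 ∧ ω ∈ B i)
              = (Finset.univ.filter fun i : Fin top => (i : ℕ) < k ∧ ω ∈ B i) := by
            ext j
            simp only [Finset.mem_filter, Finset.mem_univ, true_and]
            constructor
            · rintro ⟨hjk, hjB⟩
              rcases Nat.lt_succ_iff_lt_or_eq.mp hjk with h | h
              · exact ⟨h, hjB⟩
              · exact absurd hjB (by rw [show j = ι from Fin.ext h]; exact hmem)
            · rintro ⟨hjk, hjB⟩
              exact ⟨Nat.lt_succ_of_lt hjk, hjB⟩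
          rw [hset]
          calc (f ω (k + 1) : ℝ) ≤ (f ω k : ℝ) := Nat.cast_le.mpr (hfmono ω k)
            _ ≤ _ := ihk
    have htopfilter : (Finset.univ.filter fun i : Fin top => (i : ℕ) < top ∧ ω ∈ B i)
        = (Finset.univ.filter fun i : Fin top => ω ∈ B i) := by
      ext j; simp [j.isLt]
    have hbound := hind top le_rfl
    rw [htopfilter] at hbound
    have h1 : (f ω top : ℝ) ≤ 1 := by
      calc (f ω top : ℝ) ≤ (1 - p / 4) ^ (Finset.univ.filter
              fun i : Fin top => ω ∈ B i).card * (n : ℝ) := hbound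
        _ ≤ (1 - p / 4) ^ a * (n : ℝ) := by
            apply mul_le_mul_of_nonneg_right _ hn0.le
            exact pow_le_pow_of_le_one hq0 hq1 hacard
        _ ≤ 1 := hkey
    have h2 : (2 : ℝ) ≤ (f ω top : ℝ) := by exact_mod_cast hω
    linarith
  -- Step 2: Chernoff
  set t : ℝ := -Real.log 2 with ht
  have ht0 : t ≤ 0 := by rw [ht]; linarith [Real.log_pos one_lt_two]
  have hexpt : Real.exp t = 2⁻¹ := by
    rw [ht, Real.exp_neg, Real.exp_log two_pos]
  -- mgf of each indicator
  have hmgfX : ∀ i, mgf (X i) μ t = 1 - α / 2 := by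
    intro i
    have hfe : (fun ω => Real.exp (t * X i ω))
        = fun ω => (B i).indicator (fun _ => (2⁻¹ - 1 : ℝ)) ω + 1 := by
      ext ω
      by_cases hωB : ω ∈ B i
      · simp [hX, Set.indicator_of_mem hωB, hexpt]
      · simp [hX, Set.indicator_of_notMem hωB]
    rw [mgf, hfe, integral_add ((integrable_const _).indicator (hBmeas i)) (integrable_const 1),
      integral_indicator_const _ (hBmeas i), integral_const, measureReal_def, hBα i,
      ENNReal.toReal_ofReal hα0.le]
    simp; ring
  have hmgfS : mgf S μ t = (1 - α / 2) ^ top := by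
    have hind := (hBindep.iIndepFun_indicator (m := inferInstance)).mgf_sum (μ := μ) (t := t)
        (fun i : Fin top => measurable_const.indicator (hBmeas i)) Finset.univ
    have hprod : (∏ i : Fin top, mgf ((B i).indicator fun _ : Ω => (1:ℝ)) μ t)
        = (1 - α / 2) ^ top := by
      rw [Finset.prod_congr rfl fun i _ => hmgfX i, Finset.prod_const, Finset.card_univ,
        Fintype.card_fin]
    exact hind.trans hprod
  -- integrability of exp (t * S)
  have hSmeas : Measurable S := by
    have hrw : S = fun ω => ∑ i : Fin top, X i ω := by
      ext ω; rw [hS, Finset.sum_apply]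
    rw [hrw]; exact Finset.measurable_sum _ fun i _ => hXmeas i
  have hSnonneg : ∀ ω, 0 ≤ S ω := by
    intro ω
    rw [hSapp]; positivity
  have hint : Integrable (fun ω => Real.exp (t * S ω)) μ := by
    refine Integrable.mono' (integrable_const 1)
      ((hSmeas.const_mul t).exp.aestronglyMeasurable) (ae_of_all _ fun ω => ?_)
    rw [Real.norm_eq_abs, abs_of_pos (Real.exp_pos _), ← Real.exp_zero]
    exact Real.exp_le_exp.mpr (mul_nonpos_of_nonpos_of_nonneg ht0 (hSnonneg ω))
  have hcher := measure_le_le_exp_mul_mgf (X := S) (μ := μ) (a : ℝ) ht0 hint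
  rw [hmgfS] at hcher
  -- numeric bound
  have hαtop1 : 2 * (a : ℝ) ≤ α * top := by
    have h := le_trans (le_max_left _ _) htop
    rwa [div_le_iff₀ hα0, mul_comm (↑top) α] at h
  have hαtop2 : 8 * c * Real.log n ≤ α * top := by
    have h := le_trans (le_max_right _ _) htop
    rwa [div_le_iff₀ hα0, mul_comm (↑top) α] at h
  have hlog2 : Real.log 2 < 3/4 := by
    have := Real.log_two_lt_d9; linarith
  have hlog2pos : 0 < Real.log 2 := Real.log_pos one_lt_two
  have hexpbound : Real.exp (-t * (a : ℝ)) * (1 - α / 2) ^ top ≤ (n : ℝ) ^ (-c) := by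
    have h1 : (1 - α / 2) ^ top ≤ Real.exp (-(α / 2)) ^ top := by
      apply pow_le_pow_left₀ (by linarith)
      linarith [Real.add_one_le_exp (-(α / 2))]
    have h2 : Real.exp (-(α / 2)) ^ top = Real.exp (-(α / 2) * top) := by
      rw [← Real.exp_nat_mul]; ring_nf
    calc Real.exp (-t * (a : ℝ)) * (1 - α / 2) ^ top
        ≤ Real.exp (-t * (a : ℝ)) * Real.exp (-(α / 2) * top) := by
          apply mul_le_mul_of_nonneg_left _ (Real.exp_pos _).le
          rw [← h2]; exact h1
      _ = Real.exp (Real.log 2 * a + (-(α / 2) * top)) := by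
          rw [← Real.exp_add, ht]; ring_nf
      _ ≤ Real.exp (Real.log n * (-c)) := by
          apply Real.exp_le_exp.mpr
          have e1 : Real.log 2 * (2 * (a : ℝ)) ≤ Real.log 2 * (α * top) :=
            mul_le_mul_of_nonneg_left hαtop1 hlog2pos.le
          have e2 : 0 ≤ (α * top) * (3/4 - Real.log 2) :=
            mul_nonneg (mul_nonneg hα0.le (Nat.cast_nonneg top)) (by linarith)
          nlinarith [e1, e2, hαtop2]
      _ = (n : ℝ) ^ (-c) := by rw [Real.rpow_def_of_pos hn0]
  -- assemble
  calc μ {ω | 2 ≤ f ω top} ≤ μ {ω | S ω ≤ (a : ℝ)} := measure_mono hincl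
    _ ≤ ENNReal.ofReal ((n : ℝ) ^ (-c)) := by
        rw [ENNReal.le_ofReal_iff_toReal_le (measure_ne_top _ _)
          (Real.rpow_nonneg hn0.le _)]
        exact hcher.trans hexpbound
    _ = (n : ℝ≥0∞) ^ (-c) := by
        rw [← ENNReal.ofReal_rpow_of_pos hn0, ENNReal.ofReal_natCast]
end

section
/- Let (Ω, μ) be a probability space, let E be a finite set, and let C ⊆ E with |C| ≥ 2. Let h : Ω → (E → {0,1}) be a random function such that the family (h(e))_{e ∈ E} is pairwise independent with each h(e) uniformly distributed on {0,1}, and let f_0, f_1 : Ω → (E → {0,1}) be random functions such that each f_b is (1/8)-odd, i.e., for every nonempty S ⊆ E, Pr[∑_{x ∈ S} f_b(x) ≡ 1 (mod 2)] ≥ 1/8. Assume h, f_0 and f_1 are mutually independent. Then the probability that both ∑_{e ∈ C, h(e) = 0} f_0(e) ≡ 1 (mod 2) and ∑_{e ∈ C, h(e) = 1} f_1(e) ≡ 1 (mod 2) is at least 1/128. -/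
open MeasureTheory ProbabilityTheory
open scoped ENNReal

lemma nullMeasurable_of_add_compl_le {Ω : Type*} [MeasurableSpace Ω] (μ : Measure Ω)
    [IsProbabilityMeasure μ] {s : Set Ω} (hle : μ s + μ sᶜ ≤ 1) :
    NullMeasurableSet s μ := by
  set t := toMeasurable μ s with htdef
  set t' := toMeasurable μ sᶜ with ht'def
  have hts : s ⊆ t := subset_toMeasurable μ s
  have ht's : sᶜ ⊆ t' := subset_toMeasurable μ sᶜ
  have huniv : t ∪ t' = Set.univ := by
    apply Set.eq_univ_of_univ_subset
    intro x _
    by_cases hx : x ∈ s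
    · exact Or.inl (hts hx)
    · exact Or.inr (ht's hx)
  have h1 : μ (t ∪ t') + μ (t ∩ t') = μ t + μ t' :=
    measure_union_add_inter t (measurableSet_toMeasurable μ sᶜ)
  rw [huniv, measure_univ, measure_toMeasurable, measure_toMeasurable] at h1
  have hzero : μ (t ∩ t') = 0 := by
    have h2 : (1 : ℝ≥0∞) + μ (t ∩ t') ≤ 1 + 0 := by
      rw [add_zero, h1]; exact hle
    simpa using (ENNReal.add_le_add_iff_left (by norm_num)).mp h2
  have hdiff : μ (t \ s) = 0 := by
    refine measure_mono_null (fun x hx => ?_) hzero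
    exact ⟨hx.1, ht's hx.2⟩
  have hae : s =ᵐ[μ] t := by
    rw [ae_eq_set]
    refine ⟨?_, hdiff⟩
    rw [Set.diff_eq_empty.mpr hts]; simp
  exact (measurableSet_toMeasurable μ s).nullMeasurableSet.congr hae.symm

theorem stmt11 {Ω : Type*} [MeasurableSpace Ω] (μ : Measure Ω) [IsProbabilityMeasure μ]
    {E : Type*} [Fintype E] [DecidableEq E] (C : Finset E) (hC : 2 ≤ C.card)
    (h : Ω → E → Bool) (f : Fin 2 → Ω → E → Bool)
    (hunif : ∀ (e : E) (b : Bool), μ {ω | h ω e = b} = 1 / 2)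
    (hpairindep : ∀ e e' : E, e ≠ e' → ∀ b b' : Bool,
      μ ({ω | h ω e = b} ∩ {ω | h ω e' = b'}) = μ {ω | h ω e = b} * μ {ω | h ω e' = b'})
    (hodd : ∀ (b : Fin 2) (S : Finset E), S.Nonempty →
      1 / 8 ≤ μ {ω | Odd (∑ x ∈ S, if f b ω x then (1 : ℕ) else 0)})
    (hindep : iIndepFun (m := fun _ : Fin 3 => (inferInstance : MeasurableSpace (E → Bool)))
      ![h, f 0, f 1] μ) :
    1 / 128 ≤ μ {ω |
      Odd (∑ e ∈ C.filter (fun e => h ω e = false), if f 0 ω e then (1 : ℕ) else 0) ∧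
      Odd (∑ e ∈ C.filter (fun e => h ω e = true), if f 1 ω e then (1 : ℕ) else 0)} := by
  classical
  obtain ⟨e, he, e', he', hne⟩ := Finset.one_lt_card.mp hC
  set S0 : (E → Bool) → Finset E := fun g => C.filter fun x => g x = false with hS0
  set S1 : (E → Bool) → Finset E := fun g => C.filter fun x => g x = true with hS1
  set G : Finset (E → Bool) := Finset.univ.filter (fun g => (S0 g).Nonempty ∧ (S1 g).Nonempty)
    with hG
  set A : (E → Bool) → Set Ω := fun g => {ω | h ω = g} with hA
  set B0 : (E → Bool) → Set Ω :=
    fun g => {ω | Odd (∑ x ∈ S0 g, if f 0 ω x then (1 : ℕ) else 0)} with hB0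
  set B1 : (E → Bool) → Set Ω :=
    fun g => {ω | Odd (∑ x ∈ S1 g, if f 1 ω x then (1 : ℕ) else 0)} with hB1
  set D : (E → Bool) → Set Ω := fun g => A g ∩ B0 g ∩ B1 g with hD
  -- null measurability of basic h-events
  have hnm : ∀ (a : E) (b : Bool), NullMeasurableSet {ω | h ω a = b} μ := by
    intro a b
    apply nullMeasurable_of_add_compl_le μ
    have hcompl : {ω | h ω a = b}ᶜ = {ω | h ω a = !b} := by
      ext ω; cases hb : h ω a <;> cases b <;> simp [hb]
    rw [hcompl, hunif, hunif, ENNReal.add_halves]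
  have hAnm : ∀ g, NullMeasurableSet (A g) μ := by
    intro g
    have : A g = ⋂ a, {ω | h ω a = g a} := by
      ext ω; simp [hA, funext_iff]
    rw [this]
    exact NullMeasurableSet.iInter fun a => hnm a (g a)
  have hAdisj : ∀ g g', g ≠ g' → Disjoint (A g) (A g') := by
    intro g g' hgg'
    rw [Set.disjoint_left]
    intro ω hω hω'
    exact hgg' (hω.symm.trans hω')
  -- product formula
  have hprod : ∀ g, μ (D g) = μ (A g) * (μ (B0 g) * μ (B1 g)) := by
    intro g
    have hmeas := hindep.meas_iInter (s := ![A g, B0 g, B1 g]) ?_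
    · have hiInter : (⋂ i, ![A g, B0 g, B1 g] i) = D g := by
        ext ω
        simp only [Set.mem_iInter]
        constructor
        · intro hω
          exact ⟨⟨hω 0, hω 1⟩, hω 2⟩
        · intro hω i
          match i with
          | 0 => exact hω.1.1
          | 1 => exact hω.1.2
          | 2 => exact hω.2
      rw [hiInter] at hmeas
      rw [hmeas, Fin.prod_univ_three]
      simp [mul_assoc]
    · intro i
      match i with
      | 0 =>
        refine ⟨{g}, (Set.to_countable _).measurableSet, ?_⟩
        ext ω; simp [hA]
      | 1 =>
        refine ⟨{u : E → Bool | Odd (∑ x ∈ S0 g, if u x then (1 : ℕ) else 0)},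
          (Set.to_countable _).measurableSet, rfl⟩
      | 2 =>
        refine ⟨{u : E → Bool | Odd (∑ x ∈ S1 g, if u x then (1 : ℕ) else 0)},
          (Set.to_countable _).measurableSet, rfl⟩
  -- the splitting event has measure ≥ 1/2 and is covered by ⋃ g ∈ G, A g
  have key1 : (1:ℝ≥0∞)/2 ≤ ∑ g ∈ G, μ (A g) := by
    set P1 : Set Ω := {ω | h ω e = false} ∩ {ω | h ω e' = true} with hP1
    set P2 : Set Ω := {ω | h ω e = true} ∩ {ω | h ω e' = false} with hP2
    have hP1m : μ P1 = 1/4 := by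
      rw [hP1, hpairindep e e' hne false true, hunif, hunif]
      simp only [one_div]
      rw [← ENNReal.mul_inv (by norm_num) (by norm_num)]; norm_num
    have hP2m : μ P2 = 1/4 := by
      rw [hP2, hpairindep e e' hne true false, hunif, hunif]
      simp only [one_div]
      rw [← ENNReal.mul_inv (by norm_num) (by norm_num)]; norm_num
    have hdisj : Disjoint P1 P2 := by
      rw [Set.disjoint_left]
      rintro ω ⟨h1, _⟩ ⟨h2, _⟩
      simp only [Set.mem_setOf_eq] at h1 h2
      rw [h1] at h2
      exact Bool.noConfusion h2
    have hP2nm : NullMeasurableSet P2 μ := (hnm e true).inter (hnm e' false)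
    have hunion : μ (P1 ∪ P2) = 1/2 := by
      rw [measure_union₀ hP2nm hdisj.aedisjoint, hP1m, hP2m, ENNReal.div_add_div_same,
        ENNReal.div_eq_div_iff (by norm_num) (by norm_num) (by norm_num) (by norm_num)]
      norm_num
    have hcover : P1 ∪ P2 ⊆ ⋃ g ∈ G, A g := by
      intro ω hω
      have hωG : h ω ∈ G := by
        rw [hG, Finset.mem_filter]
        refine ⟨Finset.mem_univ _, ?_, ?_⟩
        · rcases hω with ⟨h1, _⟩ | ⟨_, h2⟩
          · exact ⟨e, Finset.mem_filter.mpr ⟨he, h1⟩⟩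
          · exact ⟨e', Finset.mem_filter.mpr ⟨he', h2⟩⟩
        · rcases hω with ⟨_, h2⟩ | ⟨h1, _⟩
          · exact ⟨e', Finset.mem_filter.mpr ⟨he', h2⟩⟩
          · exact ⟨e, Finset.mem_filter.mpr ⟨he, h1⟩⟩
      exact Set.mem_biUnion hωG rfl
    calc (1:ℝ≥0∞)/2 = μ (P1 ∪ P2) := hunion.symm
      _ ≤ μ (⋃ g ∈ G, A g) := measure_mono hcover
      _ ≤ ∑ g ∈ G, μ (A g) := measure_biUnion_finset_le G A
  -- superadditivity over the disjoint null-measurable pieces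
  have key2 : ∀ s : Finset (E → Bool), ∑ g ∈ s, μ (D g) ≤ μ (⋃ g ∈ s, D g) := by
    intro s
    induction s using Finset.induction_on with
    | empty => simp
    | @insert a s ha ih =>
      have heq : μ ((⋃ g ∈ insert a s, D g) ∩ A a) + μ ((⋃ g ∈ insert a s, D g) \ A a)
          = μ (⋃ g ∈ insert a s, D g) :=
        measure_inter_add_diff₀ _ (hAnm a)
      have h1 : D a ⊆ (⋃ g ∈ insert a s, D g) ∩ A a := by
        intro ω hω
        exact ⟨Set.mem_biUnion (Finset.mem_insert_self a s) hω, hω.1.1⟩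
      have h2 : (⋃ g ∈ s, D g) ⊆ (⋃ g ∈ insert a s, D g) \ A a := by
        intro ω hω
        rcases Set.mem_iUnion₂.mp hω with ⟨g, hg, hωg⟩
        refine ⟨Set.mem_biUnion (Finset.mem_insert_of_mem hg) hωg, ?_⟩
        intro hωa
        have hga : g ≠ a := fun hga => ha (hga ▸ hg)
        exact (Set.disjoint_left.mp (hAdisj g a hga) hωg.1.1) hωa
      calc ∑ g ∈ insert a s, μ (D g) = μ (D a) + ∑ g ∈ s, μ (D g) :=
            Finset.sum_insert ha
        _ ≤ μ ((⋃ g ∈ insert a s, D g) ∩ A a) + μ ((⋃ g ∈ insert a s, D g) \ A a) :=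
            add_le_add (measure_mono h1) (ih.trans (measure_mono h2))
        _ = μ (⋃ g ∈ insert a s, D g) := heq
  -- the union of the D g is contained in the target
  have hsub : (⋃ g ∈ G, D g) ⊆ {ω |
      Odd (∑ x ∈ C.filter (fun x => h ω x = false), if f 0 ω x then (1 : ℕ) else 0) ∧
      Odd (∑ x ∈ C.filter (fun x => h ω x = true), if f 1 ω x then (1 : ℕ) else 0)} := by
    intro ω hω
    rcases Set.mem_iUnion₂.mp hω with ⟨g, _, hωg⟩
    have hg : h ω = g := hωg.1.1
    constructor
    · have : C.filter (fun x => h ω x = false) = S0 g := by rw [hS0]; simp [hg]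
      rw [this]
      exact hωg.1.2
    · have : C.filter (fun x => h ω x = true) = S1 g := by rw [hS1]; simp [hg]
      rw [this]
      exact hωg.2
  -- put everything together
  have hoddB0 : ∀ g ∈ G, (1:ℝ≥0∞)/8 ≤ μ (B0 g) := by
    intro g hg
    exact hodd 0 (S0 g) ((Finset.mem_filter.mp hg).2.1)
  have hoddB1 : ∀ g ∈ G, (1:ℝ≥0∞)/8 ≤ μ (B1 g) := by
    intro g hg
    exact hodd 1 (S1 g) ((Finset.mem_filter.mp hg).2.2)
  calc (1:ℝ≥0∞)/128 = 1/2 * (1/8 * (1/8)) := by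
        simp only [one_div, div_eq_mul_inv, mul_one, one_mul]
        rw [← ENNReal.mul_inv (by norm_num) (by norm_num),
          ← ENNReal.mul_inv (by norm_num) (by norm_num)]
        norm_num
    _ ≤ (∑ g ∈ G, μ (A g)) * (1/8 * (1/8)) := mul_le_mul_left key1 _
    _ = ∑ g ∈ G, μ (A g) * (1/8 * (1/8)) := Finset.sum_mul _ _ _
    _ ≤ ∑ g ∈ G, μ (A g) * (μ (B0 g) * μ (B1 g)) := by
        refine Finset.sum_le_sum fun g hg => ?_
        exact mul_le_mul' le_rfl (mul_le_mul' (hoddB0 g hg) (hoddB1 g hg))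
    _ = ∑ g ∈ G, μ (D g) := by
        refine Finset.sum_congr rfl fun g _ => ?_
        rw [hprod g]
    _ ≤ μ (⋃ g ∈ G, D g) := key2 G
    _ ≤ _ := measure_mono hsub
end

section
/- Let V be a finite vertex set and let G be a simple graph on V. Let F be a spanning forest of G, i.e., F is an acyclic subgraph of G such that for all vertices u, v, u and v are connected in F if and only if they are connected in G; and let F′ be a spanning forest of the graph G ∖ F whose edge set is the edges of G not in F. If G is 2-edge-connected — that is, G is connected and for every edge e of G the graph obtained from G by deleting e is connected — then F ⊔ F′ is 2-edge-connected. -/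
/-- If `G1` is connected and every edge of `G1` has its endpoints reachable in `G2`,
then `G2` is connected. -/
lemma aux_conn {V : Type*} {G1 G2 : SimpleGraph V} (h1 : G1.Connected)
    (h : ∀ a b, G1.Adj a b → G2.Reachable a b) : G2.Connected := by
  rw [SimpleGraph.connected_iff] at h1 ⊢
  refine ⟨fun u v => ?_, h1.2⟩
  obtain ⟨w⟩ := h1.1 u v
  induction w with
  | nil => exact SimpleGraph.Reachable.refl _
  | cons hadj p ih => exact (h _ _ hadj).trans ih

/- Certificate fact for 2-edge connectivity (Theorem 5.1): if `F` is a spanning forest of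
`G` and `F'` is a spanning forest of `G` with the edges of `F` removed, and `G` is
2-edge-connected, then `F ⊔ F'` is 2-edge-connected. -/
theorem stmt13 {V : Type*} [Fintype V] (G F F' : SimpleGraph V)
    (hFle : F ≤ G) (hFacyclic : F.IsAcyclic)
    (hFspan : ∀ u v, F.Reachable u v ↔ G.Reachable u v)
    (hF'le : F' ≤ G \ F) (hF'acyclic : F'.IsAcyclic)
    (hF'span : ∀ u v, F'.Reachable u v ↔ (G \ F).Reachable u v)
    (hGconn : G.Connected)
    (hG2 : ∀ e ∈ G.edgeSet, (G.deleteEdges {e}).Connected) :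
    (F ⊔ F').Connected ∧ ∀ e ∈ (F ⊔ F').edgeSet, ((F ⊔ F').deleteEdges {e}).Connected := by
  have hFconn : F.Connected :=
    aux_conn hGconn fun a b hab => (hFspan a b).2 hab.reachable
  refine ⟨aux_conn hFconn (fun a b hab => hab.reachable.mono le_sup_left), ?_⟩
  intro e he
  rw [SimpleGraph.edgeSet_sup] at he
  rcases he with heF | heF'
  · -- e is an edge of F; use that G \ {e} is connected
    have hGe : (G.deleteEdges {e}).Connected :=
      hG2 e (SimpleGraph.edgeSet_mono hFle heF)
    apply aux_conn hGe
    intro a b hab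
    rw [SimpleGraph.deleteEdges_adj] at hab
    by_cases hF : F.Adj a b
    · exact SimpleGraph.Adj.reachable
        (SimpleGraph.deleteEdges_adj.mpr ⟨Or.inl hF, hab.2⟩)
    · have hGF : (G \ F).Adj a b := ⟨hab.1, hF⟩
      have hr : F'.Reachable a b := (hF'span a b).2 hGF.reachable
      refine hr.mono ?_
      intro x y hxy
      refine SimpleGraph.deleteEdges_adj.mpr ⟨Or.inr hxy, ?_⟩
      simp only [Set.mem_singleton_iff]
      rintro rfl
      exact (hF'le hxy).2 heF
  · -- e is an edge of F'; the spanning forest F survives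
    refine aux_conn hFconn ?_
    intro a b hab
    refine SimpleGraph.Adj.reachable
      (SimpleGraph.deleteEdges_adj.mpr ⟨Or.inl hab, ?_⟩)
    simp only [Set.mem_singleton_iff]
    rintro rfl
    exact (hF'le heF').2 hab
end
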